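/- Let G be a finite connected graph with ν vertices. Define the equivalence relation ∼ on the edge set of G as the equivalence relation generated by: e ∼ e' if e = e' or {e, e'} is a bond. Let F be a set of edges of G consisting of all cut edges of G together with, for each ∼-equivalence class of cardinality q ≥ 2, some choice of q − 1 of its edges. Then the spanning subgraph of G with edge set F contains no cycle; consequently the cardinality of F is at most ν − 1. -/

import Mathlib

/-!
If `{a, b}` is a bond and a cycle passes through `a` but not `b`, the cycle survives in the
connected graph `G - b`, so deleting `a` from it too leaves `G - {a, b}` connected, which is
absurd. Hence each `∼`-class lies entirely on or entirely off any given cycle. A cycle with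
edges in `F` contains a non-bridge edge `e`, so it would put the whole class of `e` into `F`,
whereas `F` holds only `q - 1` of its `q ≥ 2` edges. The bound on `|F|` follows by extending
the forest `F` to a spanning tree of `G`.
-/

/-- A bond of a connected graph `G` is a minimal nonempty set of edges of `G`
whose deletion disconnects `G`: deleting it disconnects `G`, but deleting any
proper subset leaves the graph connected. -/
def SimpleGraph.IsBond {V : Type*} (G : SimpleGraph V) (E' : Set (Sym2 V)) : Prop :=
  E'.Nonempty ∧ E' ⊆ G.edgeSet ∧ ¬ (G.deleteEdges E').Connected ∧
    ∀ F ⊂ E', (G.deleteEdges F).Connected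

/-- The equivalence relation `∼` on edges, generated by: `e ∼ e'` if `e = e'`
or `{e, e'}` is a bond. -/
def SimpleGraph.EdgeEquiv {V : Type*} (G : SimpleGraph V) (e e' : Sym2 V) : Prop :=
  Relation.EqvGen (fun a b => a = b ∨ G.IsBond {a, b}) e e'

namespace SimpleGraph

variable {V : Type*} {G : SimpleGraph V}

lemma Connected.connected_deleteEdges_of_mem_edges_of_isCycle (hG : G.Connected) {u : V}
    {p : G.Walk u u} (hp : p.IsCycle) {e : Sym2 V} (he : e ∈ p.edges) :
    (G.deleteEdges {e}).Connected := by
  induction e using Sym2.ind with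
  | _ x y =>
    exact hG.connected_delete_edge_of_not_isBridge fun hb ↦ hb.notMem_edges_of_isCycle hp he

lemma IsBond.mem_edges_of_mem_edges {a b : Sym2 V} (hbond : G.IsBond {a, b}) {u : V}
    {p : G.Walk u u} (hp : p.IsCycle) (ha : a ∈ p.edges) : b ∈ p.edges := by
  obtain rfl | hab := eq_or_ne a b
  · exact ha
  by_contra hb
  obtain ⟨-, -, hdisconn, hmin⟩ := hbond
  have hconn : (G.deleteEdges {b}).Connected :=
    hmin {b} (Set.ssubset_iff_subset_ne.mpr
      ⟨by simp, fun h ↦ hab (by simpa using h.symm.subset (Set.mem_insert a {b}))⟩)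
  have hp_edges : ∀ e ∈ p.edges, e ∈ (G.deleteEdges {b}).edgeSet := fun e he ↦ by
    rw [edgeSet_deleteEdges]
    exact ⟨p.edges_subset_edgeSet he, by rintro rfl; exact hb he⟩
  have := hconn.connected_deleteEdges_of_mem_edges_of_isCycle (hp.transfer hp_edges)
    (by rwa [Walk.edges_transfer])
  rw [deleteEdges_deleteEdges, Set.union_comm, Set.singleton_union] at this
  exact hdisconn this

lemma EdgeEquiv.mem_edges_iff {a b : Sym2 V} (h : G.EdgeEquiv a b) {u : V} {p : G.Walk u u}
    (hp : p.IsCycle) : a ∈ p.edges ↔ b ∈ p.edges := by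
  induction h with
  | rel x y hxy =>
    rcases hxy with rfl | hbond
    · rfl
    · exact ⟨hbond.mem_edges_of_mem_edges hp,
        (Set.pair_comm x y ▸ hbond).mem_edges_of_mem_edges hp⟩
  | refl => rfl
  | symm _ _ _ ih => exact ih.symm
  | trans _ _ _ _ _ ih₁ ih₂ => exact ih₁.trans ih₂

lemma edgeSet_fromEdgeSet_of_subset {F : Set (Sym2 V)} (hF : F ⊆ G.edgeSet) :
    (fromEdgeSet F).edgeSet = F := by
  rw [edgeSet_fromEdgeSet, sdiff_eq_left]
  exact Set.disjoint_left.mpr fun _ he ↦ G.not_isDiag_of_mem_edgeSet (hF he)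

lemma fromEdgeSet_le_of_subset_edgeSet {F : Set (Sym2 V)} (hF : F ⊆ G.edgeSet) :
    fromEdgeSet F ≤ G :=
  (fromEdgeSet_le G).mpr (Set.sdiff_subset.trans hF)

lemma Connected.ncard_edgeSet_le_of_le_of_isAcyclic [Fintype V] (hG : G.Connected)
    {H : SimpleGraph V} (hHG : H ≤ G) (hH : H.IsAcyclic) :
    H.edgeSet.ncard ≤ Fintype.card V - 1 := by
  classical
  obtain ⟨T, hHT, -, hT⟩ := hG.exists_isTree_le_of_le_of_isAcyclic hHG hH
  have hcard := hT.card_edgeFinset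
  have hle : H.edgeSet.ncard ≤ T.edgeFinset.card := by
    rw [← Set.ncard_coe_finset, coe_edgeFinset]
    exact Set.ncard_le_ncard (edgeSet_mono hHT)
  omega

lemma isAcyclic_fromEdgeSet_of_ncard_inter_eq_sub_one {F : Set (Sym2 V)}
    (hFsub : F ⊆ G.edgeSet)
    (hFmem : ∀ e ∈ F, G.IsBridge e ∨ 2 ≤ {e' | G.EdgeEquiv e e'}.ncard)
    (hchoice : ∀ c ∈ G.edgeSet, 2 ≤ {e | G.EdgeEquiv c e}.ncard →
      ({e | G.EdgeEquiv c e} ∩ F).ncard = {e | G.EdgeEquiv c e}.ncard - 1) :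
    (fromEdgeSet F).IsAcyclic := by
  intro v C hC
  have hle := fromEdgeSet_le_of_subset_edgeSet hFsub
  have hp := hC.mapLe hle
  have hpF : ∀ e ∈ (C.mapLe hle).edges, e ∈ F := fun e he ↦ by
    rw [Walk.edges_mapLe_eq_edges] at he
    simpa [edgeSet_fromEdgeSet_of_subset hFsub] using C.edges_subset_edgeSet he
  obtain ⟨e, he⟩ := List.exists_mem_of_ne_nil _ (Walk.edges_eq_nil.not.mpr hp.not_nil)
  have hq : 2 ≤ {e' | G.EdgeEquiv e e'}.ncard :=
    (hFmem e (hpF e he)).resolve_left fun hb ↦ hb.notMem_edges_of_isCycle hp he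
  have hclass : {e' | G.EdgeEquiv e e'} ⊆ F := fun _ he' ↦
    hpF _ ((he'.mem_edges_iff hp).mp he)
  have hcard := hchoice e ((C.mapLe hle).edges_subset_edgeSet he) hq
  rw [Set.inter_eq_left.mpr hclass] at hcard
  omega

end SimpleGraph

theorem chosen_edges_acyclic_general {V : Type*} [Fintype V]
    (G : SimpleGraph V) (hG : G.Connected) (F : Set (Sym2 V))
    (hFsub : F ⊆ G.edgeSet)
    (hFmem : ∀ e ∈ F, G.IsBridge e ∨ 2 ≤ {e' | G.EdgeEquiv e e'}.ncard)
    (hchoice : ∀ c ∈ G.edgeSet, 2 ≤ {e | G.EdgeEquiv c e}.ncard →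
      ({e | G.EdgeEquiv c e} ∩ F).ncard = {e | G.EdgeEquiv c e}.ncard - 1) :
    (∀ (v : V) (C : (SimpleGraph.fromEdgeSet F).Walk v v), ¬ C.IsCycle) ∧
      F.ncard ≤ Fintype.card V - 1 := by
  have hac := G.isAcyclic_fromEdgeSet_of_ncard_inter_eq_sub_one hFsub hFmem hchoice
  refine ⟨fun _ C ↦ hac C, ?_⟩
  simpa [G.edgeSet_fromEdgeSet_of_subset hFsub] using
    hG.ncard_edgeSet_le_of_le_of_isAcyclic (G.fromEdgeSet_le_of_subset_edgeSet hFsub) hac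

/-- Let `G` be a finite connected graph on `ν` vertices, and let `F` be a set
of edges of `G` consisting of all cut edges of `G` together with, from each
`∼`-equivalence class of cardinality `q ≥ 2`, some choice of `q − 1` of its
edges.  Then the spanning subgraph of `G` with edge set `F` contains no cycle;
consequently `F` has at most `ν − 1` elements. -/
theorem chosen_edges_acyclic {V : Type*} [Fintype V]
    (G : SimpleGraph V) (hG : G.Connected) (F : Set (Sym2 V))
    (hFsub : F ⊆ G.edgeSet)
    (hbr : ∀ e : Sym2 V, G.IsBridge e → e ∈ F)
    (hFmem : ∀ e ∈ F, G.IsBridge e ∨ 2 ≤ {e' | G.EdgeEquiv e e'}.ncard)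
    (hchoice : ∀ c ∈ G.edgeSet, 2 ≤ {e | G.EdgeEquiv c e}.ncard →
      ({e | G.EdgeEquiv c e} ∩ F).ncard = {e | G.EdgeEquiv c e}.ncard - 1) :
    (∀ (v : V) (C : (SimpleGraph.fromEdgeSet F).Walk v v), ¬ C.IsCycle) ∧
      F.ncard ≤ Fintype.card V - 1 :=
  chosen_edges_acyclic_general G hG F hFsub hFmem hchoice
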